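/- For every degree ℓ ≥ 0, order −ℓ ≤ m ≤ ℓ, and point (λ,θ), the spherical harmonic satisfies |Y_ℓ^m(λ,θ)| ≤ √((2ℓ+1)/(4π)). -/

import Mathlib

/-- The Legendre polynomial `P_ℓ` via the Rodrigues formula. -/
noncomputable def legendreP (l : ℕ) : Polynomial ℝ :=
  Polynomial.C (1 / (2 ^ l * (Nat.factorial l) : ℝ)) *
    (Polynomial.derivative^[l] ((Polynomial.X ^ 2 - 1) ^ l))

/-- The associated Legendre function `P_ℓ^m(x) = (−1)^m (1−x²)^{m/2} dᵐ/dxᵐ P_ℓ(x)`. -/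
noncomputable def assocLegendre (l m : ℕ) (x : ℝ) : ℝ :=
  (-1 : ℝ) ^ m * (Real.sqrt (1 - x ^ 2)) ^ m *
    (Polynomial.derivative^[m] (legendreP l)).eval x

/-- The spherical harmonic `Y_ℓ^m(λ,θ)` with the usual orthonormal normalization,
with `Y_ℓ^{−m} = (−1)^m conj(Y_ℓ^m)` for negative orders. -/
noncomputable def sphY (l : ℕ) (m : ℤ) (lam θ : ℝ) : ℂ :=
  if 0 ≤ m then
    ((Real.sqrt ((2 * l + 1) / (4 * Real.pi)) *
      Real.sqrt ((Nat.factorial (l - m.toNat) : ℝ) / (Nat.factorial (l + m.toNat))) *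
      assocLegendre l m.toNat (Real.cos θ) : ℝ) : ℂ) *
      Complex.exp (Complex.I * (m : ℝ) * lam)
  else
    (-1 : ℂ) ^ m.natAbs * (starRingEnd ℂ)
      (((Real.sqrt ((2 * l + 1) / (4 * Real.pi)) *
        Real.sqrt ((Nat.factorial (l - m.natAbs) : ℝ) / (Nat.factorial (l + m.natAbs))) *
        assocLegendre l m.natAbs (Real.cos θ) : ℝ) : ℂ) *
        Complex.exp (Complex.I * (m.natAbs : ℝ) * lam))

/-!
The addition theorem in Unsöld's polynomial form: with `c₀ = 1` and `c_m = 2` for `m ≥ 1`,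
`∑_{m ≤ ℓ} c_m (ℓ-m)!/(ℓ+m)! (1 - x²)^m (P_ℓ^{(m)}(x))² = 1`.
Writing `y_m = P_ℓ^{(m)}`, the differentiated Legendre equation
`(1 - x²) y_{m+2} - 2(m+1) x y_{m+1} + (ℓ-m)(ℓ+m+1) y_m = 0` makes the derivative of the partial
sums telescope to a multiple of `y_{ℓ+1} = 0`, and at `x = 1` only `P_ℓ(1)² = 1` survives.
For `|x| ≤ 1` every term is nonnegative, so each is at most `1`; this is
`|Y_ℓ^m|² ≤ (2ℓ+1)/(4π)`.
-/

open Polynomial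

section ODE

variable {R : Type*} [CommRing R]

theorem X_sq_sub_one_mul_derivative_pow (l : ℕ) :
    ((X : R[X]) ^ 2 - 1) * derivative ((X ^ 2 - 1) ^ l) = C (2 * l : R) * X * (X ^ 2 - 1) ^ l := by
  cases l with
  | zero => simp
  | succ k =>
    rw [derivative_pow]
    simp only [Nat.add_sub_cancel, derivative_sub, derivative_one, derivative_X_pow, map_mul,
      map_natCast, map_ofNat]
    push_cast
    ring

theorem iterate_derivative_ode {f : R[X]} {a b : R}
    (h : (1 - X ^ 2) * derivative^[2] f - C (2 * a) * X * derivative f + C b * f = 0) (n : ℕ) :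
    (1 - X ^ 2) * derivative^[n + 2] f - C (2 * (a + n)) * X * derivative^[n + 1] f
      + C (b - 2 * n * a - n * (n - 1)) * derivative^[n] f = 0 := by
  induction n with
  | zero => simpa using h
  | succ n ih =>
    have h' := congrArg derivative ih
    simp only [derivative_add, derivative_sub, derivative_mul, derivative_C, derivative_X,
      derivative_one, derivative_X_pow, derivative_zero, ← Function.iterate_succ_apply'] at h'
    simp only [map_sub, map_add, map_mul, map_natCast, map_ofNat, Nat.cast_add, Nat.cast_one,
      map_one] at h' ⊢
    linear_combination h'

end ODE

theorem iterate_derivative_legendreP (l m : ℕ) :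
    derivative^[m] (legendreP l)
      = C (1 / (2 ^ l * l.factorial : ℝ)) * derivative^[l + m] ((X ^ 2 - 1) ^ l) := by
  rw [legendreP, iterate_derivative_C_mul, ← Function.iterate_add_apply, add_comm]

theorem legendreP_ode (l m : ℕ) :
    (1 - X ^ 2) * derivative^[m + 2] (legendreP l)
      - C (2 * (m + 1) : ℝ) * X * derivative^[m + 1] (legendreP l)
      + C (((l : ℝ) - m) * (l + m + 1)) * derivative^[m] (legendreP l) = 0 := by
  -- the equation for `(X² - 1)^ℓ` has `a = 1 - ℓ`, `b = 2ℓ`; `ℓ + m` derivatives turn it into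
  -- the one for `P_ℓ^{(m)}`
  have hu : (1 - X ^ 2) * derivative^[2] ((X ^ 2 - 1) ^ l)
      - C (2 * (1 - l : ℝ)) * X * derivative ((X ^ 2 - 1) ^ l)
      + C (2 * l : ℝ) * (X ^ 2 - 1) ^ l = 0 := by
    have h := congrArg derivative (X_sq_sub_one_mul_derivative_pow (R := ℝ) l)
    simp only [derivative_mul, derivative_sub, derivative_X_pow, derivative_one, derivative_C,
      derivative_X, Function.iterate_succ_apply', Function.iterate_zero_apply] at h ⊢
    simp only [map_sub, map_mul, map_natCast, map_ofNat, map_one] at h ⊢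
    linear_combination -h
  have h := iterate_derivative_ode hu (l + m)
  simp only [iterate_derivative_legendreP, ← add_assoc]
  simp only [map_sub, map_add, map_mul, map_natCast, map_ofNat, map_one, Nat.cast_add] at h ⊢
  linear_combination C (1 / (2 ^ l * l.factorial : ℝ)) * h

theorem natDegree_legendreP_le (l : ℕ) : (legendreP l).natDegree ≤ l := by
  have hu : (((X : ℝ[X]) ^ 2 - 1) ^ l).natDegree ≤ l * 2 := by
    refine natDegree_pow_le_of_le l ((natDegree_sub_le ((X : ℝ[X]) ^ 2) 1).trans ?_)
    simp
  refine (natDegree_C_mul_le _ _).trans ((natDegree_iterate_derivative _ _).trans ?_)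
  omega

theorem iterate_derivative_legendreP_succ_eq_zero (l : ℕ) :
    derivative^[l + 1] (legendreP l) = 0 :=
  iterate_derivative_eq_zero (Nat.lt_succ_of_le (natDegree_legendreP_le l))

theorem legendreP_eval_one (l : ℕ) : (legendreP l).eval 1 = 1 := by
  have hfac : ((X : ℝ[X]) ^ 2 - 1) ^ l = (X - C 1) ^ l * (X - C (-1)) ^ l := by
    rw [← mul_pow]; congr 1; simp only [map_one, map_neg, sub_neg_eq_add]; ring
  -- by Leibniz, only the term differentiating `(X - 1)^l` exactly `l` times survives at `1`
  rw [legendreP, hfac, iterate_derivative_mul, eval_mul, eval_C, eval_finsetSum,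
    Finset.sum_eq_single 0]
  · simp only [Nat.sub_zero, Nat.choose_zero_right, one_smul, Function.iterate_zero_apply,
      iterate_derivative_X_sub_pow_self, eval_mul, eval_natCast, eval_pow, eval_sub, eval_X,
      eval_C]
    rw [show (1 : ℝ) - -1 = 2 by norm_num]
    field_simp
  · intro k hk hk0
    rw [iterate_derivative_X_sub_pow, Nat.sub_sub_self (Finset.mem_range_succ_iff.mp hk)]
    simp [hk0]
  · simp

noncomputable def legendreWeight (l m : ℕ) : ℝ := (l - m).factorial / (l + m).factorial

theorem legendreWeight_nonneg (l m : ℕ) : 0 ≤ legendreWeight l m := by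
  unfold legendreWeight; positivity

theorem legendreWeight_eq_mul (l k : ℕ) (hk : k < l) :
    legendreWeight l k = legendreWeight l (k + 1) * (((l : ℝ) - k) * (l + k + 1)) := by
  have hsub : l - k = (l - (k + 1)) + 1 := by omega
  have hcast : ((l - (k + 1) : ℕ) : ℝ) + 1 = l - k := by
    rw [Nat.cast_sub hk]; push_cast; ring
  rw [legendreWeight, legendreWeight, hsub, Nat.factorial_succ, ← add_assoc,
    Nat.factorial_succ (l + k)]
  push_cast
  rw [hcast]
  field_simp

/-- For `k = ℓ` and `x = cos θ` this is `4π/(2ℓ+1) · ∑_{|m| ≤ ℓ} |Y_ℓ^m(λ,θ)|²`, the orders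
`±m` together contributing the factor `2`. -/
noncomputable def unsoldSum (l k : ℕ) : ℝ[X] :=
  ∑ m ∈ Finset.range (k + 1), C ((if m = 0 then 1 else 2) * legendreWeight l m) *
    (1 - X ^ 2) ^ m * (derivative^[m] (legendreP l)) ^ 2

theorem derivative_unsoldSum (l k : ℕ) (hk : k ≤ l) :
    derivative (unsoldSum l k) = C (2 * legendreWeight l k) * (1 - X ^ 2) ^ k *
      derivative^[k] (legendreP l) * derivative^[k + 1] (legendreP l) := by
  induction k with
  | zero =>
    simp only [unsoldSum, zero_add, Finset.sum_range_one, if_true, one_mul, pow_zero, mul_one,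
      Function.iterate_zero_apply, Function.iterate_one, derivative_C_mul, derivative_sq]
    rw [C_mul]
    ring
  | succ k ih =>
    rw [unsoldSum, Finset.sum_range_succ, derivative_add, ← unsoldSum, ih (by omega),
      if_neg k.succ_ne_zero, legendreWeight_eq_mul l k (by omega)]
    have hode := legendreP_ode l k
    simp only [derivative_mul, derivative_C, derivative_pow, derivative_sub, derivative_one,
      derivative_X, Nat.add_sub_cancel, ← Function.iterate_succ_apply', Nat.succ_eq_add_one]
      at hode ⊢
    simp only [map_sub, map_add, map_mul, map_natCast, map_ofNat, map_one, Nat.cast_add,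
      Nat.cast_one] at hode ⊢
    linear_combination (2 * C (legendreWeight l (k + 1)) * (1 - X ^ 2) ^ k *
      derivative^[k + 1] (legendreP l)) * hode

theorem unsoldSum_eq_one (l : ℕ) : unsoldSum l l = 1 := by
  have hconst := eq_C_of_derivative_eq_zero (by
    rw [derivative_unsoldSum l l le_rfl, iterate_derivative_legendreP_succ_eq_zero, mul_zero])
  have heval : (unsoldSum l l).eval 1 = 1 := by
    rw [unsoldSum, eval_finsetSum, Finset.sum_eq_single 0]
    · simp [legendreWeight, legendreP_eval_one, Nat.factorial_ne_zero]
    · intro m _ hm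
      simp [zero_pow hm]
    · simp
  rw [hconst, eval_C] at heval
  rw [hconst, heval, map_one]

theorem legendreWeight_mul_le_one {l m : ℕ} (hm : m ≤ l) {x : ℝ} (hx : x ^ 2 ≤ 1) :
    legendreWeight l m * ((1 - x ^ 2) ^ m * ((derivative^[m] (legendreP l)).eval x) ^ 2) ≤ 1 := by
  have hsum := congrArg (eval x) (unsoldSum_eq_one l)
  simp only [unsoldSum, eval_finsetSum, eval_mul, eval_pow, eval_sub, eval_one, eval_X,
    eval_C] at hsum
  have h1x : 0 ≤ 1 - x ^ 2 := by linarith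
  have hterm (j : ℕ) : 0 ≤ (if j = 0 then 1 else 2) * legendreWeight l j * (1 - x ^ 2) ^ j *
      ((derivative^[j] (legendreP l)).eval x) ^ 2 := by
    have := legendreWeight_nonneg l j
    positivity
  have hprod : 0 ≤ legendreWeight l m * ((1 - x ^ 2) ^ m *
      ((derivative^[m] (legendreP l)).eval x) ^ 2) := by
    have := legendreWeight_nonneg l m
    positivity
  calc legendreWeight l m * ((1 - x ^ 2) ^ m * ((derivative^[m] (legendreP l)).eval x) ^ 2)
      ≤ (if m = 0 then 1 else 2) * (legendreWeight l m * ((1 - x ^ 2) ^ m *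
          ((derivative^[m] (legendreP l)).eval x) ^ 2)) :=
        le_mul_of_one_le_left hprod (by split_ifs <;> norm_num)
    _ = (if m = 0 then 1 else 2) * legendreWeight l m * (1 - x ^ 2) ^ m *
          ((derivative^[m] (legendreP l)).eval x) ^ 2 := by ring
    _ ≤ _ := Finset.single_le_sum (fun j _ => hterm j) (Finset.mem_range_succ_iff.mpr hm)
    _ = 1 := hsum

theorem assocLegendre_sq (l m : ℕ) {x : ℝ} (hx : x ^ 2 ≤ 1) :
    assocLegendre l m x ^ 2 = (1 - x ^ 2) ^ m * ((derivative^[m] (legendreP l)).eval x) ^ 2 := by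
  rw [assocLegendre, mul_pow, mul_pow, ← pow_mul, ← pow_mul, pow_mul', pow_mul',
    Real.sq_sqrt (by linarith)]
  simp

theorem sqrt_legendreWeight_mul_abs_assocLegendre_le_one {l m : ℕ} (hm : m ≤ l) {x : ℝ}
    (hx : x ^ 2 ≤ 1) : √(legendreWeight l m) * |assocLegendre l m x| ≤ 1 := by
  rw [← Real.sqrt_sq_eq_abs, ← Real.sqrt_mul (legendreWeight_nonneg l m), assocLegendre_sq l m hx]
  exact Real.sqrt_le_one.mpr (legendreWeight_mul_le_one hm hx)

theorem norm_sphY (l : ℕ) (m : ℤ) (lam θ : ℝ) :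
    ‖sphY l m lam θ‖ = √((2 * l + 1) / (4 * Real.pi)) * √(legendreWeight l m.natAbs) *
      |assocLegendre l m.natAbs (Real.cos θ)| := by
  unfold sphY
  split_ifs with hm
  · rw [show m.toNat = m.natAbs by omega]
    simp [Complex.norm_exp, legendreWeight, abs_of_nonneg]
  · simp [Complex.norm_exp, legendreWeight, abs_of_nonneg]

/-- For every degree `ℓ ≥ 0`, order `−ℓ ≤ m ≤ ℓ`, and point `(λ,θ)`, the spherical
harmonic satisfies `|Y_ℓ^m(λ,θ)| ≤ √((2ℓ+1)/(4π))`. -/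
theorem sphY_abs_le (l : ℕ) (m : ℤ) (hm : m.natAbs ≤ l) (lam θ : ℝ) :
    ‖sphY l m lam θ‖ ≤ Real.sqrt ((2 * l + 1) / (4 * Real.pi)) := by
  rw [norm_sphY, mul_assoc]
  exact mul_le_of_le_one_right (Real.sqrt_nonneg _)
    (sqrt_legendreWeight_mul_abs_assocLegendre_le_one hm (Real.cos_sq_le_one θ))
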